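/- arXiv:2111.06985 — 3 statements merged into one kernel-verified Lean document; each statement's English description precedes it below -/
import Mathlib

section
/- Let Y be an n×p real matrix such that the smallest eigenvalue of YYᵀ satisfies λ_min(YYᵀ) ≥ δp for some δ > 0. Then ‖Y(I_p + YᵀY)⁻¹Yᵀ - I_n‖₂ ≤ 1/(1 + δp), where ‖·‖₂ is the spectral norm. -/
/-!
By the push-through identity `Y (1 + YᵀY)⁻¹ = (1 + YYᵀ)⁻¹ Y`, the matrix
`Y (1 + YᵀY)⁻¹ Yᵀ - 1` equals `-(1 + YYᵀ)⁻¹`. The eigenvalue bound says `δp ≤ YYᵀ` in the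
Loewner order, so `1 + δp ≤ 1 + YYᵀ`; by the isometric functional calculus for the
self-adjoint matrix `1 + YYᵀ`, whose spectrum lies in `[1 + δp, ∞)`, its inverse has norm at
most `1 / (1 + δp)`.
-/

open Matrix
open scoped Matrix.Norms.L2Operator MatrixOrder Ring

section AlgebraMapLE

variable {A : Type*} {a : A} {c : ℝ}

lemma IsSelfAdjoint.of_algebraMap_le [Ring A] [StarRing A] [Algebra ℝ A] [StarModule ℝ A]
    [PartialOrder A] [StarOrderedRing A] (h : algebraMap ℝ A c ≤ a) : IsSelfAdjoint a := by
  simpa using (IsSelfAdjoint.of_nonneg (sub_nonneg.mpr h)).add (.algebraMap A (.all c))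

lemma isUnit_of_algebraMap_le [Ring A] [StarRing A] [TopologicalSpace A] [Algebra ℝ A]
    [StarModule ℝ A] [PartialOrder A] [StarOrderedRing A]
    [ContinuousFunctionalCalculus ℝ A IsSelfAdjoint] [NonnegSpectrumClass ℝ A]
    (hc : 0 < c) (h : algebraMap ℝ A c ≤ a) : IsUnit a := by
  rw [algebraMap_le_iff_le_spectrum (IsSelfAdjoint.of_algebraMap_le h)] at h
  exact spectrum.isUnit_of_zero_notMem ℝ fun h0 => (h 0 h0).not_gt hc

lemma norm_ringInverse_le_of_algebraMap_le [NormedRing A] [StarRing A] [NormedAlgebra ℝ A]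
    [StarModule ℝ A] [PartialOrder A] [StarOrderedRing A]
    [IsometricContinuousFunctionalCalculus ℝ A IsSelfAdjoint] [NonnegSpectrumClass ℝ A]
    (hc : 0 < c) (h : algebraMap ℝ A c ≤ a) : ‖a⁻¹ʳ‖ ≤ c⁻¹ := by
  have ha := IsSelfAdjoint.of_algebraMap_le h
  rw [← cfc_ringInverse_id (R := ℝ) (ha_unit := isUnit_of_algebraMap_le hc h) (ha := ha)]
  rw [algebraMap_le_iff_le_spectrum ha] at h
  refine norm_cfc_le (inv_nonneg.mpr hc.le) fun x hx => ?_
  rw [Real.norm_of_nonneg (inv_nonneg.mpr (hc.trans_le (h x hx)).le)]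
  exact inv_anti₀ hc (h x hx)

end AlgebraMapLE

namespace Matrix

lemma IsHermitian.algebraMap_le_iff_le_eigenvalues {n 𝕜 : Type*} [Fintype n] [DecidableEq n]
    [RCLike 𝕜] {A : Matrix n n 𝕜} (hA : A.IsHermitian) {t : ℝ} :
    algebraMap ℝ (Matrix n n 𝕜) t ≤ A ↔ ∀ i, t ≤ hA.eigenvalues i := by
  rw [algebraMap_le_iff_le_spectrum (a := A) hA.isSelfAdjoint,
    hA.spectrum_real_eq_range_eigenvalues, Set.forall_mem_range]

variable {m n α : Type*} [Fintype m] [Fintype n] [DecidableEq m] [DecidableEq n] [CommRing α]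

-- Both sides vanish when `1 + B * A` is singular, since then so is `1 + A * B`.
theorem mul_inv_one_add_mul_comm (A : Matrix m n α) (B : Matrix n m α) :
    A * (1 + B * A)⁻¹ = (1 + A * B)⁻¹ * A := by
  by_cases h : IsUnit (1 + B * A).det
  · have h' : IsUnit (1 + A * B).det := by rwa [det_one_add_mul_comm]
    have hcomm : (1 + A * B) * A = A * (1 + B * A) := by
      simp only [Matrix.add_mul, Matrix.mul_add, Matrix.one_mul, Matrix.mul_one, Matrix.mul_assoc]
    calc A * (1 + B * A)⁻¹ = (1 + A * B)⁻¹ * ((1 + A * B) * A) * (1 + B * A)⁻¹ := by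
          rw [nonsing_inv_mul_cancel_left _ _ h']
      _ = (1 + A * B)⁻¹ * A := by
          rw [hcomm, ← Matrix.mul_assoc, mul_nonsing_inv_cancel_right _ _ h]
  · have h' : ¬IsUnit (1 + A * B).det := by rwa [det_one_add_mul_comm]
    simp [nonsing_inv_apply_not_isUnit _ h, nonsing_inv_apply_not_isUnit _ h']

theorem mul_inv_one_add_mul_mul_sub_one (A : Matrix m n α) (B : Matrix n m α)
    (h : IsUnit (1 + A * B).det) : A * (1 + B * A)⁻¹ * B - 1 = -(1 + A * B)⁻¹ := by
  calc A * (1 + B * A)⁻¹ * B - 1 = (1 + A * B)⁻¹ * (A * B - (1 + A * B)) := by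
        rw [mul_inv_one_add_mul_comm, Matrix.mul_sub, nonsing_inv_mul _ h, Matrix.mul_assoc]
    _ = -(1 + A * B)⁻¹ := by simp

end Matrix

theorem stmt14 (n p : ℕ) (Y : Matrix (Fin n) (Fin p) ℝ) (δ : ℝ) (hδ : 0 < δ)
    (hmin : ∀ i, δ * p ≤ (Matrix.posSemidef_conjTranspose_mul_self Yᵀ).1.eigenvalues i) :
    ‖Y * (1 + Yᵀ * Y)⁻¹ * Yᵀ - 1‖ ≤ 1 / (1 + δ * p) := by
  have hc : 0 < 1 + δ * p := by positivity
  have hgram : algebraMap ℝ _ (δ * p) ≤ Y * Yᵀ := by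
    simpa using (IsHermitian.algebraMap_le_iff_le_eigenvalues _).mpr hmin
  have hle : algebraMap ℝ _ (1 + δ * p) ≤ 1 + Y * Yᵀ := by
    simpa only [map_add, map_one] using add_le_add_right hgram 1
  have hunit : IsUnit (1 + Y * Yᵀ).det :=
    (isUnit_iff_isUnit_det _).mp (isUnit_of_algebraMap_le hc hle)
  rw [mul_inv_one_add_mul_mul_sub_one Y Yᵀ hunit, norm_neg, nonsing_inv_eq_ringInverse, one_div]
  exact norm_ringInverse_le_of_algebraMap_le hc hle
end

section
/- Suppose for each p we have an n×p matrix Y_p with λ_min(Y_pY_pᵀ)/p ≥ δ > 0 eventually. Then lim_{p→∞} ‖Y_p(I_p + Y_pᵀY_p)⁻¹Y_pᵀ - I_n‖₂ = 0. -/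
open Matrix Filter Topology
open scoped Matrix.Norms.L2Operator

/-- If all eigenvalues of a hermitian real matrix are at least `c`, then `A - c • 1` is psd. -/
lemma aux_psd_sub {m : ℕ} {A : Matrix (Fin m) (Fin m) ℝ} (hA : A.IsHermitian) {c : ℝ}
    (h : ∀ i, c ≤ hA.eigenvalues i) : (A - c • (1 : Matrix (Fin m) (Fin m) ℝ)).PosSemidef := by
  have hU : (hA.eigenvectorUnitary : Matrix (Fin m) (Fin m) ℝ) *
      (star (hA.eigenvectorUnitary : Matrix (Fin m) (Fin m) ℝ)) = 1 :=
    Matrix.mem_unitaryGroup_iff.mp hA.eigenvectorUnitary.2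
  have key : A - c • (1 : Matrix (Fin m) (Fin m) ℝ) =
      (hA.eigenvectorUnitary : Matrix (Fin m) (Fin m) ℝ) *
        (Matrix.diagonal (fun i => hA.eigenvalues i - c)) *
        (star (hA.eigenvectorUnitary : Matrix (Fin m) (Fin m) ℝ)) := by
    have hd : Matrix.diagonal (fun i : Fin m => hA.eigenvalues i - c) =
        Matrix.diagonal (RCLike.ofReal ∘ hA.eigenvalues) - c • 1 := by
      ext i j
      by_cases hij : i = j <;>
        simp [hij, Matrix.diagonal_apply, Matrix.one_apply, Matrix.sub_apply]
    rw [hd, Matrix.mul_sub, Matrix.sub_mul,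
      ← Unitary.conjStarAlgAut_apply (S := ℝ) (x := Matrix.diagonal (RCLike.ofReal ∘ hA.eigenvalues)),
      ← hA.spectral_theorem]
    congr 1
    rw [Matrix.mul_smul, Matrix.smul_mul, mul_one, hU]
  rw [key, Matrix.star_eq_conjTranspose]
  exact (Matrix.posSemidef_diagonal_iff.mpr
    (fun i => sub_nonneg.mpr (h i))).mul_mul_conjTranspose_same _

/-- Coercivity: eigenvalue lower bound gives quadratic form lower bound. -/
lemma aux_coercive {m : ℕ} {A : Matrix (Fin m) (Fin m) ℝ} (hA : A.IsHermitian) {c : ℝ}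
    (h : ∀ i, c ≤ hA.eigenvalues i) (x : Fin m → ℝ) :
    c * (x ⬝ᵥ x) ≤ x ⬝ᵥ (A *ᵥ x) := by
  have := (aux_psd_sub hA h).dotProduct_mulVec_nonneg x
  rw [Matrix.sub_mulVec, dotProduct_sub] at this
  simp only [star_trivial] at this
  have h1 : (c • (1 : Matrix (Fin m) (Fin m) ℝ)) *ᵥ x = c • x := by
    simp [Matrix.smul_mulVec]
  rw [h1, dotProduct_smul, smul_eq_mul] at this
  linarith

/-- Norm bound for the inverse of a coercive positive definite matrix. -/
lemma aux_inv_norm_le {m : ℕ} {B : Matrix (Fin m) (Fin m) ℝ} (hB : B.PosDef) {c : ℝ}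
    (hc : 0 < c) (hcoer : ∀ x : Fin m → ℝ, c * (x ⬝ᵥ x) ≤ x ⬝ᵥ (B *ᵥ x)) :
    ‖B⁻¹‖ ≤ c⁻¹ := by
  have hdet : IsUnit B.det := (Matrix.isUnit_iff_isUnit_det B).mp hB.isUnit
  -- lower bound for the action of B on Euclidean space
  have hlow : ∀ x : EuclideanSpace ℝ (Fin m),
      c * ‖x‖ ≤ ‖(WithLp.equiv 2 (Fin m → ℝ)).symm (B *ᵥ (WithLp.equiv 2 (Fin m → ℝ) x))‖ := by
    intro x
    rcases eq_or_ne x 0 with rfl | hx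
    · simp
    · have hxpos : (0 : ℝ) < ‖x‖ := norm_pos_iff.mpr hx
      set y : EuclideanSpace ℝ (Fin m) :=
        (WithLp.equiv 2 (Fin m → ℝ)).symm (B *ᵥ (WithLp.equiv 2 (Fin m → ℝ) x)) with hy
      have hinner1 : (inner ℝ x x : ℝ) = (WithLp.equiv 2 (Fin m → ℝ) x) ⬝ᵥ
          (WithLp.equiv 2 (Fin m → ℝ) x) := by
        rw [EuclideanSpace.inner_eq_star_dotProduct]; simp
      have hinner2 : (inner ℝ x y : ℝ) = (WithLp.equiv 2 (Fin m → ℝ) x) ⬝ᵥ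
          (B *ᵥ (WithLp.equiv 2 (Fin m → ℝ) x)) := by
        rw [EuclideanSpace.inner_eq_star_dotProduct]
        simp [hy, dotProduct_comm]
      have h1 : c * (‖x‖ * ‖x‖) ≤ ‖x‖ * ‖y‖ := by
        calc c * (‖x‖ * ‖x‖) = c * (inner ℝ x x : ℝ) := by
              rw [real_inner_self_eq_norm_mul_norm]
          _ ≤ (inner ℝ x y : ℝ) := by rw [hinner1, hinner2]; exact hcoer _
          _ ≤ ‖x‖ * ‖y‖ := real_inner_le_norm x y
      have := le_of_mul_le_mul_right (by linarith [h1] :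
        (c * ‖x‖) * ‖x‖ ≤ ‖y‖ * ‖x‖) hxpos
      exact this
  -- now bound the operator norm of the inverse
  rw [Matrix.l2_opNorm_def]
  apply ContinuousLinearMap.opNorm_le_bound _ (inv_nonneg.mpr hc.le)
  intro y
  set x : EuclideanSpace ℝ (Fin m) :=
    (WithLp.equiv 2 (Fin m → ℝ)).symm (B⁻¹ *ᵥ (WithLp.equiv 2 (Fin m → ℝ) y)) with hx
  have happ : (Matrix.toEuclideanLin.trans LinearMap.toContinuousLinearMap B⁻¹) y = x := by
    rfl
  rw [happ]
  have hBx : B *ᵥ (WithLp.equiv 2 (Fin m → ℝ) x) = WithLp.equiv 2 (Fin m → ℝ) y := by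
    have haux : B *ᵥ (B⁻¹ *ᵥ (WithLp.equiv 2 (Fin m → ℝ) y)) =
        WithLp.equiv 2 (Fin m → ℝ) y := by
      rw [Matrix.mulVec_mulVec, Matrix.mul_nonsing_inv _ hdet, Matrix.one_mulVec]
    exact haux
  have := hlow x
  rw [hBx] at this
  have hyy : (WithLp.equiv 2 (Fin m → ℝ)).symm (WithLp.equiv 2 (Fin m → ℝ) y) = y := by simp
  rw [hyy] at this
  have h4 := mul_le_mul_of_nonneg_left this (inv_pos.mpr hc).le
  rw [← mul_assoc, inv_mul_cancel₀ hc.ne', one_mul] at h4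
  exact h4

/-- the key algebraic identity. -/
lemma aux_identity {n p : ℕ} (Y : Matrix (Fin n) (Fin p) ℝ) :
    Y * (1 + Yᵀ * Y)⁻¹ * Yᵀ - 1 = -(1 + Y * Yᵀ)⁻¹ := by
  have hpsdB : (Yᵀ * Y).PosSemidef := by
    have := Matrix.posSemidef_conjTranspose_mul_self Y
    rwa [Matrix.conjTranspose_eq_transpose_of_trivial] at this
  have hpsdC : (Y * Yᵀ).PosSemidef := by
    have := Matrix.posSemidef_conjTranspose_mul_self Yᵀ
    rwa [Matrix.conjTranspose_eq_transpose_of_trivial, Matrix.transpose_transpose] at this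
  have hB : (1 + Yᵀ * Y).PosDef := Matrix.PosDef.add_posSemidef Matrix.PosDef.one hpsdB
  have hC : (1 + Y * Yᵀ).PosDef := Matrix.PosDef.add_posSemidef Matrix.PosDef.one hpsdC
  have hdetB : IsUnit (1 + Yᵀ * Y).det := (Matrix.isUnit_iff_isUnit_det _).mp hB.isUnit
  have hdetC : IsUnit (1 + Y * Yᵀ).det := (Matrix.isUnit_iff_isUnit_det _).mp hC.isUnit
  have hswap : (1 + Y * Yᵀ) * Y = Y * (1 + Yᵀ * Y) := by
    rw [Matrix.add_mul, Matrix.mul_add, Matrix.one_mul, Matrix.mul_one, Matrix.mul_assoc]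
  have h2 : Y * (1 + Yᵀ * Y)⁻¹ = (1 + Y * Yᵀ)⁻¹ * Y := by
    calc Y * (1 + Yᵀ * Y)⁻¹
        = ((1 + Y * Yᵀ)⁻¹ * (1 + Y * Yᵀ)) * Y * (1 + Yᵀ * Y)⁻¹ := by
          rw [Matrix.nonsing_inv_mul _ hdetC, Matrix.one_mul]
      _ = (1 + Y * Yᵀ)⁻¹ * ((1 + Y * Yᵀ) * Y) * (1 + Yᵀ * Y)⁻¹ := by
          rw [Matrix.mul_assoc ((1 + Y * Yᵀ)⁻¹)]
      _ = (1 + Y * Yᵀ)⁻¹ * (Y * (1 + Yᵀ * Y)) * (1 + Yᵀ * Y)⁻¹ := by rw [hswap]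
      _ = (1 + Y * Yᵀ)⁻¹ * Y * ((1 + Yᵀ * Y) * (1 + Yᵀ * Y)⁻¹) := by
          rw [Matrix.mul_assoc, Matrix.mul_assoc, Matrix.mul_assoc]
      _ = (1 + Y * Yᵀ)⁻¹ * Y := by rw [Matrix.mul_nonsing_inv _ hdetB, Matrix.mul_one]
  rw [h2, Matrix.mul_assoc]
  have h3 : (1 + Y * Yᵀ)⁻¹ * (Y * Yᵀ) = 1 - (1 + Y * Yᵀ)⁻¹ := by
    have hmul : (1 + Y * Yᵀ)⁻¹ * (1 + Y * Yᵀ) = 1 := Matrix.nonsing_inv_mul _ hdetC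
    rw [Matrix.mul_add, Matrix.mul_one] at hmul
    exact eq_sub_of_add_eq' hmul
  rw [h3]
  abel

theorem stmt16 (n : ℕ) (Y : ∀ p : ℕ, Matrix (Fin n) (Fin p) ℝ) (δ : ℝ) (hδ : 0 < δ)
    (hmin : ∃ P : ℕ, ∀ p ≥ P, ∀ i,
      δ * p ≤ (Matrix.posSemidef_conjTranspose_mul_self (Y p)ᵀ).1.eigenvalues i) :
    Tendsto (fun p => ‖Y p * (1 + (Y p)ᵀ * Y p)⁻¹ * (Y p)ᵀ - 1‖) atTop (𝓝 0) := by
  obtain ⟨P, hP⟩ := hmin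
  have htend : Tendsto (fun p : ℕ => (1 + δ * p)⁻¹) atTop (𝓝 0) := by
    apply tendsto_inv_atTop_zero.comp
    exact tendsto_atTop_add_const_left _ 1
      (Tendsto.const_mul_atTop hδ tendsto_natCast_atTop_atTop)
  apply squeeze_zero' (Eventually.of_forall fun p => norm_nonneg _) _ htend
  filter_upwards [eventually_ge_atTop P] with p hp
  have hA : (((Y p)ᵀ)ᴴ * (Y p)ᵀ).IsHermitian :=
    (Matrix.posSemidef_conjTranspose_mul_self (Y p)ᵀ).1
  have hAeq : ((Y p)ᵀ)ᴴ * (Y p)ᵀ = Y p * (Y p)ᵀ := by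
    rw [Matrix.conjTranspose_eq_transpose_of_trivial, Matrix.transpose_transpose]
  have hpsdC : (Y p * (Y p)ᵀ).PosSemidef := hAeq ▸ Matrix.posSemidef_conjTranspose_mul_self (Y p)ᵀ
  have hC : (1 + Y p * (Y p)ᵀ).PosDef := Matrix.PosDef.add_posSemidef Matrix.PosDef.one hpsdC
  have hcpos : (0 : ℝ) < 1 + δ * p := by positivity
  have hcoerA : ∀ x : Fin n → ℝ, (δ * p) * (x ⬝ᵥ x) ≤ x ⬝ᵥ ((Y p * (Y p)ᵀ) *ᵥ x) := by
    intro x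
    have := aux_coercive hA (hP p hp) x
    rwa [hAeq] at this
  have hcoer : ∀ x : Fin n → ℝ, (1 + δ * p) * (x ⬝ᵥ x) ≤ x ⬝ᵥ ((1 + Y p * (Y p)ᵀ) *ᵥ x) := by
    intro x
    have h0 : (0 : ℝ) ≤ x ⬝ᵥ x := by
      simpa using dotProduct_star_self_nonneg x
    have := hcoerA x
    rw [Matrix.add_mulVec, Matrix.one_mulVec, dotProduct_add]
    nlinarith
  calc ‖Y p * (1 + (Y p)ᵀ * Y p)⁻¹ * (Y p)ᵀ - 1‖
      = ‖(1 + Y p * (Y p)ᵀ)⁻¹‖ := by rw [aux_identity (Y p), norm_neg]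
    _ ≤ (1 + δ * p)⁻¹ := aux_inv_norm_le hC hcpos hcoer
end

section
/- For the real Gamma function, and any fixed a > 0, lim_{x→∞} Γ(x + a)/(Γ(x)·xᵃ) = 1. -/
/-!
`log ∘ Γ` is convex on `(0, ∞)` and increases by `log y` from `y` to `y + 1`. Comparing slopes
of adjacent chords, its slope over `[x, x + a]` lies between `log (x - 1)` and `log (x + a)`, so
`log Γ(x + a) - log Γ(x) = a log x + o(1)`; exponentiating gives the limit.
-/

open Real Filter Topology

namespace Real

lemma log_Gamma_add_one {x : ℝ} (hx : 0 < x) :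
    log (Gamma (x + 1)) = log (Gamma x) + log x := by
  rw [Gamma_add_one hx.ne', log_mul hx.ne' (Gamma_pos_of_pos hx).ne', add_comm]

lemma mul_log_sub_one_le_log_Gamma_add_sub {x a : ℝ} (hx : 1 < x) (ha : 0 < a) :
    a * log (x - 1) ≤ log (Gamma (x + a)) - log (Gamma x) := by
  have hslope := convexOn_log_Gamma.slope_mono_adjacent (x := x - 1) (y := x) (z := x + a)
    (Set.mem_Ioi.2 (by linarith)) (Set.mem_Ioi.2 (by linarith)) (by linarith) (by linarith)
  have hstep := log_Gamma_add_one (x := x - 1) (by linarith)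
  rw [sub_add_cancel] at hstep
  simp only [Function.comp_apply, sub_sub_cancel, div_one, add_sub_cancel_left] at hslope
  rw [hstep, add_sub_cancel_left, le_div_iff₀ ha] at hslope
  linarith

lemma log_Gamma_add_sub_le_mul_log_add {x a : ℝ} (hx : 0 < x) (ha : 0 < a) :
    log (Gamma (x + a)) - log (Gamma x) ≤ a * log (x + a) := by
  have hslope := convexOn_log_Gamma.slope_mono_adjacent (x := x) (y := x + a) (z := x + a + 1)
    (Set.mem_Ioi.2 hx) (Set.mem_Ioi.2 (by linarith)) (by linarith) (by linarith)
  have hstep := log_Gamma_add_one (x := x + a) (by linarith)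
  simp only [Function.comp_apply, add_sub_cancel_left, div_one] at hslope
  rw [hstep, add_sub_cancel_left, div_le_iff₀ ha] at hslope
  linarith

lemma tendsto_log_Gamma_add_sub_log_Gamma_sub_mul_log {a : ℝ} (ha : 0 < a) :
    Tendsto (fun x => log (Gamma (x + a)) - log (Gamma x) - a * log x) atTop (𝓝 0) := by
  have hlower := (tendsto_log_comp_add_sub_log (-1)).const_mul a
  have hupper := (tendsto_log_comp_add_sub_log a).const_mul a
  rw [mul_zero] at hlower hupper
  refine tendsto_of_tendsto_of_tendsto_of_le_of_le' hlower hupper ?_ ?_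
  · filter_upwards [eventually_gt_atTop 1] with x hx
    have := mul_log_sub_one_le_log_Gamma_add_sub hx ha
    rw [← sub_eq_add_neg]
    linarith
  · filter_upwards [eventually_gt_atTop 0] with x hx
    have := log_Gamma_add_sub_le_mul_log_add hx ha
    linarith

end Real

theorem stmt19 (a : ℝ) (ha : 0 < a) :
    Tendsto (fun x : ℝ => Real.Gamma (x + a) / (Real.Gamma x * x ^ a))
      atTop (𝓝 1) := by
  have hexp := (continuous_exp.tendsto 0).comp
    (tendsto_log_Gamma_add_sub_log_Gamma_sub_mul_log ha)
  rw [exp_zero] at hexp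
  refine hexp.congr' ?_
  filter_upwards [eventually_gt_atTop 0] with x hx
  rw [Function.comp_apply, exp_sub, exp_sub, exp_log (Gamma_pos_of_pos (by linarith)),
    exp_log (Gamma_pos_of_pos hx), mul_comm a, ← rpow_def_of_pos hx, div_div]
end
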